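/- arXiv:2411.17327 — 2 statements merged into one kernel-verified Lean document; each statement's English description precedes it below -/
import Mathlib

section
/- Let k ≥ 1 be a natural number, let t be a nonzero real number, let F(z) = π^4/(90·k^2·z) − π^2/(6·k·z^2) − 1/(2·z^3) + π·cosh(π·√z/√k)/(2·z^2·√(z·k)·sinh(π·√z/√k)) (principal square root), and set H(z) = F(z−it) − F(z+it). Then the series Σ_{r=1}^{∞} (−1)^r e^{πirβ} H(r) and Σ_{r=1}^{∞} (−1)^r e^{−πirβ} H(−r) converge absolutely, and the convergence is uniform for β ∈ [−1,1]. -/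
open Filter

/-- The function `F` of Lemma 7 of the paper. -/
noncomputable def FF (k : ℕ) (z : ℂ) : ℂ :=
  (Real.pi : ℂ) ^ 4 / (90 * (k : ℂ) ^ 2 * z)
    - (Real.pi : ℂ) ^ 2 / (6 * (k : ℂ) * z ^ 2)
    - 1 / (2 * z ^ 3)
    + (Real.pi : ℂ) * Complex.cosh ((Real.pi : ℂ) * z ^ ((1 : ℂ)/2) / (Real.sqrt k : ℂ)) /
        (2 * z ^ 2 * (z * (k : ℂ)) ^ ((1 : ℂ)/2) *
          Complex.sinh ((Real.pi : ℂ) * z ^ ((1 : ℂ)/2) / (Real.sqrt k : ℂ)))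

/-- `H(z) = F(z - it) - F(z + it)`. -/
noncomputable def HH (k : ℕ) (t : ℝ) (z : ℂ) : ℂ :=
  FF k (z - Complex.I * (t : ℂ)) - FF k (z + Complex.I * (t : ℂ))

/-!
Both series are dominated, uniformly in `β`, by `C / r²`: the phases have modulus one, and
`H(x) = O(x⁻²)` for real `|x| ≥ 1`. In `F(x - it) - F(x + it)` the `1/z` terms cancel up to
`O(|t| / x²)`, the other rational terms are `O(z⁻²)` on their own, and the coth term is at most
`(π/2 + 1/|Im z|) / |z|²` by `|coth w| ≤ 1 + 1 / Re w` and `|Im z| ≤ 2 √|z| Re √z`. The last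
inequality is what controls the negative real axis, where `Re √z` is only of size `|t| / √x`.
-/

namespace Complex

lemma norm_cpow_one_div_two (z : ℂ) : ‖z ^ ((1 : ℂ) / 2)‖ = √‖z‖ := by
  rw [one_div, ← Nat.cast_ofNat, norm_cpow_inv_nat, Real.sqrt_eq_rpow, one_div, Nat.cast_ofNat]

lemma cpow_one_div_two_sq (z : ℂ) : (z ^ ((1 : ℂ) / 2)) ^ 2 = z := by
  rw [one_div]; exact cpow_ofNat_inv_pow z 2

lemma re_cpow_one_div_two_nonneg (z : ℂ) : 0 ≤ (z ^ ((1 : ℂ) / 2)).re := by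
  rw [one_div, cpow_inv_two_re]; exact Real.sqrt_nonneg _

lemma abs_im_le_two_mul_sqrt_norm_mul_re_cpow (z : ℂ) :
    |z.im| ≤ 2 * √‖z‖ * (z ^ ((1 : ℂ) / 2)).re := by
  set s := z ^ ((1 : ℂ) / 2)
  have him : z.im = 2 * s.re * s.im := by
    rw [← cpow_one_div_two_sq z, sq, mul_im]; ring
  have hs : |s.im| ≤ √‖z‖ := norm_cpow_one_div_two z ▸ abs_im_le_norm s
  have hre : 0 ≤ s.re := re_cpow_one_div_two_nonneg z
  calc |z.im| = 2 * s.re * |s.im| := by rw [him, abs_mul, abs_mul, abs_of_nonneg hre, abs_two]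
    _ ≤ 2 * s.re * √‖z‖ := by gcongr
    _ = 2 * √‖z‖ * s.re := by ring

lemma norm_cosh_le_cosh_re (w : ℂ) : ‖cosh w‖ ≤ Real.cosh w.re := by
  rw [cosh, Real.cosh_eq, norm_div, Complex.norm_two, ← norm_exp, ← neg_re, ← norm_exp]
  gcongr
  exact norm_add_le _ _

lemma sinh_re_le_norm_sinh (w : ℂ) : Real.sinh w.re ≤ ‖sinh w‖ := by
  rw [sinh, Real.sinh_eq, norm_div, Complex.norm_two, ← norm_exp, ← neg_re, ← norm_exp]
  gcongr
  exact norm_sub_norm_le _ _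

lemma norm_cosh_div_sinh_le {w : ℂ} (hw : 0 < w.re) :
    ‖cosh w / sinh w‖ ≤ 1 + 1 / w.re := by
  set x := w.re
  have hsinh : 0 < Real.sinh x := Real.sinh_pos_iff.2 hw
  have hcosh : Real.cosh x ≤ Real.sinh x + Real.sinh x / x := by
    have h₁ : Real.cosh x = Real.sinh x + Real.exp (-x) := by
      rw [← Real.cosh_sub_sinh]; ring
    have h₂ : Real.exp (-x) ≤ 1 := Real.exp_le_one_iff.2 (by linarith)
    have h₃ : 1 ≤ Real.sinh x / x :=
      (le_div_iff₀ hw).2 (by simpa using Real.self_le_sinh_iff.2 hw.le)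
    linarith
  calc ‖cosh w / sinh w‖ ≤ Real.cosh x / Real.sinh x := by
        rw [norm_div]
        exact div_le_div₀ (Real.cosh_pos x).le (norm_cosh_le_cosh_re w) hsinh
          (sinh_re_le_norm_sinh w)
    _ ≤ 1 + 1 / x := by
        rw [div_le_iff₀ hsinh]
        linarith [show (1 + 1 / x) * Real.sinh x = Real.sinh x + Real.sinh x / x by ring]

end Complex

open Real Complex

lemma norm_coth_term_le {k : ℕ} (hk : 1 ≤ k) {z : ℂ} (hz : 1 ≤ ‖z‖) (him : z.im ≠ 0) :
    ‖(π : ℂ) * Complex.cosh ((π : ℂ) * z ^ ((1 : ℂ) / 2) / (√k : ℂ)) /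
        (2 * z ^ 2 * (z * (k : ℂ)) ^ ((1 : ℂ) / 2) *
          Complex.sinh ((π : ℂ) * z ^ ((1 : ℂ) / 2) / (√k : ℂ)))‖
      ≤ (π / 2 + 1 / |z.im|) / ‖z‖ ^ 2 := by
  set s := z ^ ((1 : ℂ) / 2)
  set w := (π : ℂ) * s / (√k : ℂ)
  have hk' : 1 ≤ √(k : ℝ) := Real.one_le_sqrt.2 (by exact_mod_cast hk)
  have hz' : 1 ≤ √‖z‖ := Real.one_le_sqrt.2 hz
  have hs : |z.im| ≤ 2 * √‖z‖ * s.re := abs_im_le_two_mul_sqrt_norm_mul_re_cpow z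
  have hsre : 0 < s.re := by
    have : 0 < |z.im| := abs_pos.2 him
    nlinarith
  have hwre : w.re = π * s.re / √k := by
    rw [show w = ((π / √k : ℝ) : ℂ) * s by push_cast [w]; ring, re_ofReal_mul]; ring
  have hden : ‖2 * z ^ 2 * (z * (k : ℂ)) ^ ((1 : ℂ) / 2)‖ = 2 * ‖z‖ ^ 2 * (√‖z‖ * √k) := by
    rw [norm_mul, norm_mul, norm_pow, norm_cpow_one_div_two, norm_mul, Complex.norm_natCast,
      Real.sqrt_mul (norm_nonneg z), Complex.norm_two]
  calc _ = π / (2 * ‖z‖ ^ 2 * (√‖z‖ * √k)) * ‖cosh w / sinh w‖ := by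
        rw [mul_div_mul_comm, norm_mul, norm_div, hden, norm_real, Real.norm_of_nonneg pi_pos.le]
    _ ≤ π / (2 * ‖z‖ ^ 2 * (√‖z‖ * √k)) * (1 + √k / (π * s.re)) := by
        rw [← one_div_div (π * s.re), ← hwre]
        gcongr
        exact norm_cosh_div_sinh_le (by rw [hwre]; positivity)
    _ = π / (2 * ‖z‖ ^ 2 * (√‖z‖ * √k)) + 1 / (‖z‖ ^ 2 * (2 * √‖z‖ * s.re)) := by
        field_simp
    _ ≤ π / (2 * ‖z‖ ^ 2 * 1) + 1 / (‖z‖ ^ 2 * |z.im|) := by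
        gcongr
        exact one_le_mul_of_one_le_of_one_le hz' hk'
    _ = (π / 2 + 1 / |z.im|) / ‖z‖ ^ 2 := by ring

lemma norm_FF_sub_le {k : ℕ} (hk : 1 ≤ k) {z : ℂ} (hz : 1 ≤ ‖z‖) (him : z.im ≠ 0) :
    ‖FF k z - (π : ℂ) ^ 4 / (90 * (k : ℂ) ^ 2 * z)‖
      ≤ (π ^ 2 / 6 + 1 / 2 + (π / 2 + 1 / |z.im|)) / ‖z‖ ^ 2 := by
  have hk' : (1 : ℝ) ≤ k := by exact_mod_cast hk
  have h₁ : ‖(π : ℂ) ^ 2 / (6 * (k : ℂ) * z ^ 2)‖ ≤ π ^ 2 / 6 / ‖z‖ ^ 2 := by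
    simp only [norm_div, norm_mul, norm_pow, norm_real, Real.norm_of_nonneg pi_pos.le,
      Complex.norm_natCast, Complex.norm_ofNat]
    rw [div_div]
    gcongr
    linarith
  have h₂ : ‖1 / (2 * z ^ 3)‖ ≤ 1 / 2 / ‖z‖ ^ 2 := by
    simp only [norm_div, norm_mul, norm_pow, norm_one, Complex.norm_ofNat]
    rw [div_div]
    gcongr
    norm_num
  calc _ = ‖-((π : ℂ) ^ 2 / (6 * (k : ℂ) * z ^ 2)) - 1 / (2 * z ^ 3) +
        (π : ℂ) * Complex.cosh ((π : ℂ) * z ^ ((1 : ℂ) / 2) / (√k : ℂ)) /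
          (2 * z ^ 2 * (z * (k : ℂ)) ^ ((1 : ℂ) / 2) *
            Complex.sinh ((π : ℂ) * z ^ ((1 : ℂ) / 2) / (√k : ℂ)))‖ := by
        rw [FF]; ring_nf
    _ ≤ ‖(π : ℂ) ^ 2 / (6 * (k : ℂ) * z ^ 2)‖ + ‖1 / (2 * z ^ 3)‖ +
        (π / 2 + 1 / |z.im|) / ‖z‖ ^ 2 := by
        refine (norm_add_le _ _).trans (add_le_add ?_ (norm_coth_term_le hk hz him))
        exact (norm_sub_le _ _).trans_eq (by rw [norm_neg])
    _ ≤ π ^ 2 / 6 / ‖z‖ ^ 2 + 1 / 2 / ‖z‖ ^ 2 + (π / 2 + 1 / |z.im|) / ‖z‖ ^ 2 := by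
        gcongr
    _ = _ := by ring

lemma norm_HH_ofReal_le {k : ℕ} (hk : 1 ≤ k) {t : ℝ} (ht : t ≠ 0) {x : ℝ} (hx : 1 ≤ |x|) :
    ‖HH k t x‖ ≤ (π ^ 4 * |t| / 45 + 2 * (π ^ 2 / 6 + 1 / 2 + (π / 2 + 1 / |t|))) / x ^ 2 := by
  set a : ℂ := x - I * t
  set b : ℂ := x + I * t
  have hxa : |x| ≤ ‖a‖ := by simpa [a] using abs_re_le_norm a
  have hxb : |x| ≤ ‖b‖ := by simpa [b] using abs_re_le_norm b
  have hx₀ : 0 < |x| := by linarith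
  have ha₀ : a ≠ 0 := norm_pos_iff.1 (hx₀.trans_le hxa)
  have hb₀ : b ≠ 0 := norm_pos_iff.1 (hx₀.trans_le hxb)
  have hpole : ‖(π : ℂ) ^ 4 / (90 * (k : ℂ) ^ 2 * a) - (π : ℂ) ^ 4 / (90 * (k : ℂ) ^ 2 * b)‖
      ≤ π ^ 4 * |t| / 45 / x ^ 2 := by
    have hk' : (1 : ℝ) ≤ k := by exact_mod_cast hk
    have hab : dist a b = 2 * |t| := by
      rw [dist_eq_norm, show a - b = -(2 * t) * I by simp only [a, b]; ring]
      simp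
    rw [show (π : ℂ) ^ 4 / (90 * (k : ℂ) ^ 2 * a) - (π : ℂ) ^ 4 / (90 * (k : ℂ) ^ 2 * b)
        = (π : ℂ) ^ 4 / (90 * (k : ℂ) ^ 2) * (a⁻¹ - b⁻¹) by field_simp, norm_mul,
      ← dist_eq_norm, dist_inv_inv₀ ha₀ hb₀, hab]
    simp only [norm_div, norm_mul, norm_pow, norm_real, Real.norm_of_nonneg pi_pos.le,
      Complex.norm_natCast, Complex.norm_ofNat]
    calc π ^ 4 / (90 * (k : ℝ) ^ 2) * (2 * |t| / (‖a‖ * ‖b‖))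
        ≤ π ^ 4 / (90 * 1 ^ 2) * (2 * |t| / (|x| * |x|)) := by gcongr
      _ = π ^ 4 * |t| / 45 / x ^ 2 := by rw [abs_mul_abs_self]; ring
  have hremainder : ∀ c : ℂ, |x| ≤ ‖c‖ → |c.im| = |t| →
      ‖FF k c - (π : ℂ) ^ 4 / (90 * (k : ℂ) ^ 2 * c)‖
        ≤ (π ^ 2 / 6 + 1 / 2 + (π / 2 + 1 / |t|)) / x ^ 2 := by
    intro c hc hcim
    have hcim₀ : c.im ≠ 0 := by rw [← abs_pos, hcim]; exact abs_pos.2 ht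
    refine (norm_FF_sub_le hk (hx.trans hc) hcim₀).trans ?_
    rw [hcim, ← sq_abs x]
    gcongr
  calc ‖HH k t x‖
      = ‖((π : ℂ) ^ 4 / (90 * (k : ℂ) ^ 2 * a) - (π : ℂ) ^ 4 / (90 * (k : ℂ) ^ 2 * b))
          + (FF k a - (π : ℂ) ^ 4 / (90 * (k : ℂ) ^ 2 * a))
          - (FF k b - (π : ℂ) ^ 4 / (90 * (k : ℂ) ^ 2 * b))‖ := by
        rw [HH]; congr 1; ring
    _ ≤ π ^ 4 * |t| / 45 / x ^ 2 + (π ^ 2 / 6 + 1 / 2 + (π / 2 + 1 / |t|)) / x ^ 2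
          + (π ^ 2 / 6 + 1 / 2 + (π / 2 + 1 / |t|)) / x ^ 2 := by
        refine (norm_sub_le _ _).trans
          (add_le_add ((norm_add_le _ _).trans (add_le_add hpole ?_)) ?_)
        · exact hremainder a hxa (by simp [a])
        · exact hremainder b hxb (by simp [b])
    _ = _ := by ring

lemma norm_neg_one_pow_mul_exp_mul {w : ℂ} (hw : w.re = 0) (n : ℕ) (z : ℂ) :
    ‖(-1 : ℂ) ^ n * exp w * z‖ = ‖z‖ := by
  rw [norm_mul, norm_mul, norm_pow, norm_neg, norm_one, one_pow, norm_exp, hw, Real.exp_zero,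
    one_mul, one_mul]

lemma summable_norm_and_tendstoUniformlyOn_tsum {α E : Type*} [NormedAddCommGroup E]
    [CompleteSpace E] {f : ℕ → α → E} {u : ℕ → ℝ} (hu : Summable u)
    (hfu : ∀ n x, ‖f n x‖ ≤ u n) (s : Set α) :
    (∀ x ∈ s, Summable fun n => ‖f n x‖) ∧
      TendstoUniformlyOn (fun N x => ∑ n ∈ Finset.range N, f n x) (fun x => ∑' n, f n x)
        atTop s :=
  ⟨fun x _ => hu.of_nonneg_of_le (fun _ => norm_nonneg _) (hfu · x),
    tendstoUniformlyOn_tsum_nat hu fun n x _ => hfu n x⟩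

/-- Lemma 7 of the paper. -/
theorem statement3 (k : ℕ) (hk : 1 ≤ k) (t : ℝ) (ht : t ≠ 0) :
    (∀ β ∈ Set.Icc (-1 : ℝ) 1, Summable (fun r : ℕ =>
      ‖(-1 : ℂ) ^ (r + 1) * Complex.exp (Real.pi * Complex.I * ((r : ℂ) + 1) * (β : ℂ)) *
        HH k t ((r : ℂ) + 1)‖)) ∧
    (∀ β ∈ Set.Icc (-1 : ℝ) 1, Summable (fun r : ℕ =>
      ‖(-1 : ℂ) ^ (r + 1) * Complex.exp (-(Real.pi * Complex.I * ((r : ℂ) + 1) * (β : ℂ))) *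
        HH k t (-((r : ℂ) + 1))‖)) ∧
    TendstoUniformlyOn
      (fun n : ℕ => fun β : ℝ => ∑ r ∈ Finset.range n,
        (-1 : ℂ) ^ (r + 1) * Complex.exp (Real.pi * Complex.I * ((r : ℂ) + 1) * (β : ℂ)) *
          HH k t ((r : ℂ) + 1))
      (fun β : ℝ => ∑' r : ℕ,
        (-1 : ℂ) ^ (r + 1) * Complex.exp (Real.pi * Complex.I * ((r : ℂ) + 1) * (β : ℂ)) *
          HH k t ((r : ℂ) + 1))
      atTop (Set.Icc (-1 : ℝ) 1) ∧
    TendstoUniformlyOn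
      (fun n : ℕ => fun β : ℝ => ∑ r ∈ Finset.range n,
        (-1 : ℂ) ^ (r + 1) * Complex.exp (-(Real.pi * Complex.I * ((r : ℂ) + 1) * (β : ℂ))) *
          HH k t (-((r : ℂ) + 1)))
      (fun β : ℝ => ∑' r : ℕ,
        (-1 : ℂ) ^ (r + 1) * Complex.exp (-(Real.pi * Complex.I * ((r : ℂ) + 1) * (β : ℂ))) *
          HH k t (-((r : ℂ) + 1)))
      atTop (Set.Icc (-1 : ℝ) 1) := by
  obtain ⟨C, hC⟩ : ∃ C, ∀ x : ℝ, 1 ≤ |x| → ‖HH k t x‖ ≤ C / x ^ 2 :=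
    ⟨_, fun _ hx => norm_HH_ofReal_le hk ht hx⟩
  have hu : Summable fun r : ℕ => C / ((r : ℝ) + 1) ^ 2 := by
    simpa [div_eq_mul_inv] using
      ((summable_nat_add_iff 1).2 (Real.summable_nat_pow_inv.2 one_lt_two)).mul_left C
  have hr : ∀ r : ℕ, 1 ≤ |(r : ℝ) + 1| := fun r =>
    (le_add_of_nonneg_left r.cast_nonneg).trans (le_abs_self _)
  have hpos : ∀ r : ℕ, ‖HH k t ((r : ℂ) + 1)‖ ≤ C / ((r : ℝ) + 1) ^ 2 := fun r =>
    mod_cast hC _ (hr r)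
  have hneg : ∀ r : ℕ, ‖HH k t (-((r : ℂ) + 1))‖ ≤ C / ((r : ℝ) + 1) ^ 2 := fun r => by
    rw [← neg_sq]
    exact_mod_cast hC (-((r : ℝ) + 1)) (by rw [abs_neg]; exact hr r)
  have hphase : ∀ (r : ℕ) (β : ℝ), ((π : ℂ) * I * ((r : ℂ) + 1) * β).re = 0 := by simp
  refine ⟨(summable_norm_and_tendstoUniformlyOn_tsum hu ?pos _).1,
    (summable_norm_and_tendstoUniformlyOn_tsum hu ?neg _).1,
    (summable_norm_and_tendstoUniformlyOn_tsum hu ?pos _).2,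
    (summable_norm_and_tendstoUniformlyOn_tsum hu ?neg _).2⟩
  case pos => exact fun r β => (norm_neg_one_pow_mul_exp_mul (hphase r β) _ _).trans_le (hpos r)
  case neg => exact fun r β =>
    (norm_neg_one_pow_mul_exp_mul (by rw [neg_re, hphase r β, neg_zero]) _ _).trans_le (hneg r)
end

section
/- For every natural number N ≥ 1, σ(N) = q_1(N)·√N + Σ_{a=1}^{N−1} q_1(4N+a^2)·√(4N+a^2), where σ(N) = Σ_{d | N} d is the sum-of-divisors function. -/
/-!
The divisors of `N` come in complementary pairs `d < N / d`, plus `√N` when `N` is a square.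
For such a pair `(d + N / d)² = 4N + (N / d - d)²`; conversely, if `4N + b² = m²` with `b ≥ 1`,
then `m - b` is even and `d = (m - b) / 2` is a divisor with `N / d - d = b`, and `d` is
unique because `d ↦ d (d + b)` is strictly increasing. So the square roots of the perfect
squares among `4N + b²`, `1 ≤ b < N`, are exactly the sums `d + N / d`.
-/

open scoped Classical

/-- `qf k N = 1` if `N = k·m²` for some natural `m ≥ 1`, and `0` otherwise. -/
noncomputable def qf (k N : ℕ) : ℝ :=
  if ∃ m : ℕ, 1 ≤ m ∧ N = k * m ^ 2 then 1 else 0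

open Finset

namespace Nat

def smallDivisors (N : ℕ) : Finset ℕ := N.divisors.filter fun d => d * d < N

lemma lt_div_self_of_mem_smallDivisors {N d : ℕ} (hd : d ∈ smallDivisors N) : d < N / d := by
  simp only [smallDivisors, mem_filter, mem_divisors] at hd
  exact (Nat.lt_div_iff_mul_lt' hd.1.1 d).2 hd.2

lemma strictMono_mul_add (b : ℕ) : StrictMono fun d : ℕ => d * (d + b) :=
  fun _ _ h => Nat.mul_lt_mul'' h (by omega)

lemma mul_add_eq_iff_mem_smallDivisors {N d b : ℕ} (hN : N ≠ 0) (hb : 0 < b) :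
    d * (d + b) = N ↔ d ∈ smallDivisors N ∧ N / d - d = b := by
  simp only [smallDivisors, mem_filter, mem_divisors]
  constructor
  · rintro rfl
    have hd : 0 < d := Nat.pos_of_ne_zero (by rintro rfl; simp at hN)
    refine ⟨⟨⟨dvd_mul_right _ _, hN⟩, Nat.mul_lt_mul_of_pos_left (by omega) hd⟩, ?_⟩
    rw [Nat.mul_div_cancel_left _ hd]
    omega
  · rintro ⟨⟨⟨hdvd, -⟩, -⟩, hbd⟩
    rw [← Nat.mul_div_cancel' hdvd]
    congr 1
    omega

lemma isSquare_four_mul_add_sq_iff {N b : ℕ} :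
    IsSquare (4 * N + b ^ 2) ↔ ∃ d, d * (d + b) = N := by
  constructor
  · rintro ⟨m, hm⟩
    have hbm : b ≤ m := Nat.mul_self_le_mul_self_iff.1 (by nlinarith)
    obtain ⟨c, rfl⟩ : ∃ c, m = b + c := ⟨m - b, by omega⟩
    have hc : 4 * N = c * (c + 2 * b) := by nlinarith
    -- `c` and `c + 2 * b` have the same parity, so `c` must be even
    obtain ⟨d, rfl⟩ : Even c := by
      have : Even (c * (c + 2 * b)) := hc ▸ ⟨2 * N, by ring⟩
      simpa [Nat.even_mul, Nat.even_add] using this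
    exact ⟨d, by nlinarith⟩
  · rintro ⟨d, rfl⟩
    exact ⟨2 * d + b, by ring⟩

lemma mul_self_lt_iff_lt_div_mul_div {N d : ℕ} (hd : d ∣ N) (hN : N ≠ 0) :
    d * d < N ↔ N < N / d * (N / d) := by
  obtain ⟨e, rfl⟩ := hd
  have hd : 0 < d := Nat.pos_of_ne_zero (by rintro rfl; simp at hN)
  have he : 0 < e := Nat.pos_of_ne_zero (by rintro rfl; simp at hN)
  rw [Nat.mul_div_cancel_left _ hd, Nat.mul_lt_mul_left hd, Nat.mul_lt_mul_right he]

lemma sum_divisors_filter_lt_mul_self (N : ℕ) :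
    ∑ d ∈ N.divisors with N < d * d, d = ∑ d ∈ smallDivisors N, N / d := by
  rw [smallDivisors, sum_filter, sum_filter]
  conv_lhs => rw [← Nat.sum_div_divisors]
  refine sum_congr rfl fun d hd => ?_
  rw [mem_divisors] at hd
  simp only [mul_self_lt_iff_lt_div_mul_div hd.1 hd.2]

lemma sum_divisors_eq_sum_smallDivisors_add (N : ℕ) :
    ∑ d ∈ N.divisors, d =
      ∑ d ∈ smallDivisors N, (d + N / d) + ∑ d ∈ N.divisors with d * d = N, d := by
  rw [sum_add_distrib, ← sum_divisors_filter_lt_mul_self, smallDivisors, sum_filter, sum_filter,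
    sum_filter, ← sum_add_distrib, ← sum_add_distrib]
  refine sum_congr rfl fun d _ => ?_
  split_ifs <;> omega

lemma sum_divisors_filter_mul_self_eq (N : ℕ) :
    ∑ d ∈ N.divisors with d * d = N, (d : ℝ) = if IsSquare N then √N else 0 := by
  split_ifs with hN
  · obtain ⟨m, rfl⟩ := hN
    rcases Nat.eq_zero_or_pos m with rfl | hm
    · simp
    have : {d ∈ (m * m).divisors | d * d = m * m} = {m} := by
      ext d
      simp only [mem_filter, mem_divisors, mem_singleton, Nat.mul_self_inj]
      exact ⟨And.right, fun h => ⟨⟨h ▸ dvd_mul_right d d, by positivity⟩, h⟩⟩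
    rw [this, sum_singleton, Nat.cast_mul, Real.sqrt_mul_self (Nat.cast_nonneg m)]
  · exact sum_eq_zero fun d hd => absurd ⟨d, (mem_filter.1 hd).2.symm⟩ hN

lemma sum_smallDivisors_eq_sum_sqrt {N : ℕ} (hN : N ≠ 0) :
    ∑ d ∈ smallDivisors N, ((d + N / d : ℕ) : ℝ) =
      ∑ b ∈ Ico 1 N with IsSquare (4 * N + b ^ 2), √((4 * N + b ^ 2 : ℕ) : ℝ) := by
  have hpair {d : ℕ} (hd : d ∈ smallDivisors N) :
      0 < N / d - d ∧ d * (d + (N / d - d)) = N := by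
    have hlt := lt_div_self_of_mem_smallDivisors hd
    exact ⟨by omega, (mul_add_eq_iff_mem_smallDivisors hN (by omega)).2 ⟨hd, rfl⟩⟩
  refine sum_bij (fun d _ => N / d - d) (fun d hd => ?_) (fun d₁ hd₁ d₂ hd₂ h => ?_)
    (fun b hb => ?_) (fun d hd => ?_)
  · obtain ⟨hb, hdb⟩ := hpair hd
    generalize N / d - d = b at hb hdb
    have hd0 : 0 < d := Nat.pos_of_ne_zero (by rintro rfl; omega)
    simp only [mem_filter, mem_Ico]
    exact ⟨⟨hb, by nlinarith⟩, isSquare_four_mul_add_sq_iff.2 ⟨d, hdb⟩⟩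
  · obtain ⟨hb, hd₁b⟩ := hpair hd₁
    have hd₂b := (mul_add_eq_iff_mem_smallDivisors hN hb).2 ⟨hd₂, h.symm⟩
    exact (strictMono_mul_add _).injective (hd₁b.trans hd₂b.symm)
  · simp only [mem_filter, mem_Ico] at hb
    obtain ⟨d, hd⟩ := isSquare_four_mul_add_sq_iff.1 hb.2
    obtain ⟨hdS, hdb⟩ := (mul_add_eq_iff_mem_smallDivisors hN hb.1.1).1 hd
    exact ⟨d, hdS, hdb⟩
  · obtain ⟨hb, hdb⟩ := hpair hd
    have hNd : N / d = d + (N / d - d) := by omega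
    generalize N / d - d = b at hb hdb hNd ⊢
    rw [hNd, ← hdb, show 4 * (d * (d + b)) + b ^ 2 = (d + (d + b)) * (d + (d + b)) by ring,
      Nat.cast_mul, Real.sqrt_mul_self (Nat.cast_nonneg _)]

end Nat

lemma qf_one_mul_sqrt (n : ℕ) : qf 1 n * √n = if IsSquare n then √n else 0 := by
  by_cases hn : IsSquare n
  · obtain ⟨m, rfl⟩ := hn
    rcases Nat.eq_zero_or_pos m with rfl | hm
    · simp
    rw [qf, if_pos ⟨m, hm, by ring⟩, if_pos ⟨m, rfl⟩, one_mul]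
  · rw [qf, if_neg fun ⟨m, _, h⟩ => hn ⟨m, by rw [h]; ring⟩, if_neg hn, zero_mul]

/-- equation (6.1) of the paper. -/
theorem statement17 (N : ℕ) (hN : 1 ≤ N) :
    (∑ d ∈ Nat.divisors N, (d : ℝ)) =
      qf 1 N * Real.sqrt N
      + ∑ a ∈ Finset.range (N - 1),
          qf 1 (4 * N + (a + 1) ^ 2) * Real.sqrt ((4 * N + (a + 1) ^ 2 : ℕ)) := by
  have hN0 : N ≠ 0 := by omega
  rw [range_eq_Ico, sum_Ico_add' (fun b => qf 1 (4 * N + b ^ 2) * √((4 * N + b ^ 2 : ℕ) : ℝ)),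
    zero_add, Nat.sub_add_cancel hN]
  simp only [qf_one_mul_sqrt]
  rw [← sum_filter, ← Nat.sum_smallDivisors_eq_sum_sqrt hN0, ← Nat.sum_divisors_filter_mul_self_eq,
    add_comm]
  simpa only [Nat.cast_sum, Nat.cast_add] using
    congrArg (Nat.cast : ℕ → ℝ) (Nat.sum_divisors_eq_sum_smallDivisors_add N)
end
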